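/- arXiv:0905.2997 — 3 statements merged into one kernel-verified Lean document; each statement's English description precedes it below -/
import Mathlib

section
/- If ∅ ≠ T ⊆ S ⊆ H, then for every question q_i and every nonnegative weight function π with π(T) > 0, the shrinkage satisfies Δ_i(T, π) ≤ Δ_i(S, π). -/
open Finset

namespace ActiveLearning

variable {H A : Type*} {m : ℕ}

/-- The total mass of a weight function `v` on a finite set `S`. -/
def mass (v : H → ℝ) (S : Finset H) : ℝ := ∑ s ∈ S, v s

/-- `v` restricted to `S` and normalized. -/
noncomputable def restrict [DecidableEq H] (v : H → ℝ) (S : Finset H) : H → ℝ :=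
  fun h => if h ∈ S then v h / mass v S else 0

/-- The shrinkage `Δ` of a question `qi` on `(S, v)`. -/
noncomputable def shrink [Fintype A] [DecidableEq A] (qi : H → A)
    (S : Finset H) (v : H → ℝ) : ℝ :=
  mass v S - ∑ j : A, (mass v (S.filter fun s => qi s = j)) ^ 2 / mass v S

/-- The collision probability of a distribution `v`. -/
def CP [Fintype H] (v : H → ℝ) : ℝ := ∑ z : H, (v z) ^ 2

/-- Query trees: internal nodes are questions (indexed by `Fin m`), branches are answers,
leaves are hypotheses. -/
inductive QTree (m : ℕ) (H A : Type*) : Type _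
  | leaf : H → QTree m H A
  | node : Fin m → (A → QTree m H A) → QTree m H A

/-- Follow the answers of hypothesis `h` down the tree, returning the leaf reached. -/
def follow (q : Fin m → H → A) : QTree m H A → H → H
  | .leaf h', _ => h'
  | .node i ch, h => follow q (ch (q i h)) h

/-- The cost `c_T(h)`: sum of costs of the questions on the root-to-`h` path. -/
def pathCost (q : Fin m → H → A) (c : Fin m → ℝ) : QTree m H A → H → ℝ
  | .leaf _, _ => 0
  | .node i ch, h => c i + pathCost q c (ch (q i h)) h

/-- The leaves of `T` include `S`: every `h ∈ S` is identified by `T`. -/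
def ValidOn (q : Fin m → H → A) (T : QTree m H A) (S : Finset H) : Prop :=
  ∀ h ∈ S, follow q T h = h

/-- The expected cost `C(T, v)` of a query tree `T` under weights `v`. -/
noncomputable def treeCost [Fintype H] (q : Fin m → H → A) (c : Fin m → ℝ)
    (T : QTree m H A) (v : H → ℝ) : ℝ :=
  ∑ h : H, v h * pathCost q c T h

/-- The questions asked along the root-to-`h` path. -/
def pathQs (q : Fin m → H → A) : QTree m H A → H → List (Fin m)
  | .leaf _, _ => []
  | .node i ch, h => i :: pathQs q (ch (q i h)) h

/-- `T` is a greedy query tree for `π` on version space `S`: at every node it asks a question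
maximizing the shrinkage-cost ratio and recurses on each nonempty answer class. -/
inductive IsGreedy [Fintype A] [DecidableEq A] [DecidableEq H]
    (q : Fin m → H → A) (c : Fin m → ℝ) (π : H → ℝ) :
    QTree m H A → Finset H → Prop
  | leaf (h : H) : IsGreedy q c π (.leaf h) {h}
  | node (S : Finset H) (i : Fin m) (ch : A → QTree m H A)
      (hcard : 1 < S.card)
      (hmax : ∀ j : Fin m,
        shrink (q j) S (restrict π S) / c j ≤ shrink (q i) S (restrict π S) / c i)
      (hch : ∀ a : A, (S.filter fun s => q i s = a).Nonempty →
        IsGreedy q c π (ch a) (S.filter fun s => q i s = a)) :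
      IsGreedy q c π (.node i ch) S

/-- `T` is an `ε`-approximate greedy query tree for `π` on version space `S`. -/
inductive IsApproxGreedy [Fintype A] [DecidableEq A] [DecidableEq H]
    (ε : ℝ) (q : Fin m → H → A) (c : Fin m → ℝ) (π : H → ℝ) :
    QTree m H A → Finset H → Prop
  | leaf (h : H) : IsApproxGreedy ε q c π (.leaf h) {h}
  | node (S : Finset H) (i : Fin m) (ch : A → QTree m H A)
      (hcard : 1 < S.card)
      (happrox : ∀ j : Fin m,
        (1 - ε) * (shrink (q j) S (restrict π S) / c j) ≤
          shrink (q i) S (restrict π S) / c i)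
      (hch : ∀ a : A, (S.filter fun s => q i s = a).Nonempty →
        IsApproxGreedy ε q c π (ch a) (S.filter fun s => q i s = a)) :
      IsApproxGreedy ε q c π (.node i ch) S

/-- `T` is irreducible on version space `S`: every asked question strictly splits the
surviving set. -/
inductive Irreducible [DecidableEq A] (q : Fin m → H → A) :
    QTree m H A → Finset H → Prop
  | leaf (h : H) (S : Finset H) : Irreducible q (.leaf h) S
  | node (S : Finset H) (i : Fin m) (ch : A → QTree m H A)
      (hsplit : ∃ s ∈ S, ∃ t ∈ S, q i s ≠ q i t)
      (hch : ∀ a : A, (S.filter fun s => q i s = a).Nonempty →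
        Irreducible q (ch a) (S.filter fun s => q i s = a)) :
      Irreducible q (.node i ch) S

/-!
Write `Δ(S) = π(S) - C(S)` with `C(S) = Σ_j π(S^j)² / π(S)`. The map `C` is subadditive on
disjoint unions, by Sedrakyan's inequality `(a + b)² / (x + y) ≤ a² / x + b² / y` applied to
every answer class, and `C(U) ≤ π(U)` because `Σ_j π(U^j)² ≤ (Σ_j π(U^j))²`. Splitting
`S = T ∪ (S \ T)` gives `C(S) ≤ C(T) + π(S \ T)`, i.e. `Δ(T) ≤ Δ(S)`.
-/

-- Lean's `x / 0 = 0` makes this hold also when `x` or `y` vanishes.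
lemma add_sq_div_add_le {a b x y : ℝ} (ha : 0 ≤ a) (hax : a ≤ x) (hb : 0 ≤ b) (hby : b ≤ y) :
    (a + b) ^ 2 / (x + y) ≤ a ^ 2 / x + b ^ 2 / y := by
  rcases (ha.trans hax).eq_or_lt with rfl | hx
  · simp [le_antisymm hax ha]
  rcases (hb.trans hby).eq_or_lt with rfl | hy
  · simp [le_antisymm hby hb]
  rw [div_add_div _ _ hx.ne' hy.ne', div_le_div_iff₀ (by positivity) (by positivity)]
  nlinarith [sq_nonneg (a * y - b * x), mul_pos hx hy]

section Mass

variable {π : H → ℝ}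

lemma mass_nonneg (hπ : ∀ h, 0 ≤ π h) (S : Finset H) : 0 ≤ mass π S :=
  sum_nonneg fun h _ => hπ h

lemma mass_mono (hπ : ∀ h, 0 ≤ π h) {T S : Finset H} (hTS : T ⊆ S) : mass π T ≤ mass π S :=
  sum_le_sum_of_subset_of_nonneg hTS fun h _ _ => hπ h

lemma mass_union [DecidableEq H] {T U : Finset H} (hTU : Disjoint T U) :
    mass π (T ∪ U) = mass π T + mass π U :=
  sum_union hTU

end Mass

section CollisionMass

variable [Fintype A] [DecidableEq A]

/-- `π(S)` times the collision probability of the answer to `qi` when `h` is drawn from `π`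
conditioned on `S`. -/
noncomputable def collisionMass (qi : H → A) (S : Finset H) (π : H → ℝ) : ℝ :=
  ∑ j : A, mass π (S.filter fun s => qi s = j) ^ 2 / mass π S

lemma shrink_eq_mass_sub_collisionMass (qi : H → A) (S : Finset H) (π : H → ℝ) :
    shrink qi S π = mass π S - collisionMass qi S π :=
  rfl

variable {π : H → ℝ}

lemma collisionMass_le_mass (hπ : ∀ h, 0 ≤ π h) (qi : H → A) (S : Finset H) :
    collisionMass qi S π ≤ mass π S := by
  have hsum : ∑ j : A, mass π (S.filter fun s => qi s = j) = mass π S :=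
    sum_fiberwise S qi π
  rw [collisionMass, ← sum_div]
  rcases (mass_nonneg hπ S).eq_or_lt with h | h
  · simp [← h]
  · rw [div_le_iff₀ h, ← sq, ← hsum]
    exact sum_sq_le_sq_sum_of_nonneg fun j _ => mass_nonneg hπ _

lemma collisionMass_union_le [DecidableEq H] (hπ : ∀ h, 0 ≤ π h) (qi : H → A)
    {T U : Finset H} (hTU : Disjoint T U) :
    collisionMass qi (T ∪ U) π ≤ collisionMass qi T π + collisionMass qi U π := by
  rw [collisionMass, collisionMass, collisionMass, ← sum_add_distrib]
  refine sum_le_sum fun j _ => ?_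
  rw [filter_union, mass_union hTU, mass_union (disjoint_filter_filter hTU)]
  exact add_sq_div_add_le (mass_nonneg hπ _) (mass_mono hπ (filter_subset _ _))
    (mass_nonneg hπ _) (mass_mono hπ (filter_subset _ _))

end CollisionMass

theorem shrink_mono_general [Fintype A] [DecidableEq A]
    (π : H → ℝ) (hπ : ∀ h, 0 ≤ π h)
    (qi : H → A)
    (T S : Finset H) (hTS : T ⊆ S) :
    shrink qi T π ≤ shrink qi S π := by
  classical
  have hdisj : Disjoint T (S \ T) := disjoint_sdiff
  have hmass := mass_union (π := π) hdisj
  have hcoll := collisionMass_union_le hπ qi hdisj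
  rw [union_sdiff_of_subset hTS] at hmass hcoll
  rw [shrink_eq_mass_sub_collisionMass, shrink_eq_mass_sub_collisionMass, hmass]
  linarith [collisionMass_le_mass hπ qi (S \ T)]

/-- If `∅ ≠ T ⊆ S ⊆ H`, then for every question `q_i` and every nonnegative
weight function `π` with `π(T) > 0`, the shrinkage satisfies `Δ_i(T, π) ≤ Δ_i(S, π)`. -/
theorem shrink_mono [Fintype A] [DecidableEq A]
    (π : H → ℝ) (hπ : ∀ h, 0 ≤ π h)
    (qi : H → A)
    (T S : Finset H) (hT : T.Nonempty) (hTS : T ⊆ S)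
    (hmass : 0 < mass π T) :
    shrink qi T π ≤ shrink qi S π :=
  shrink_mono_general π hπ qi T S hTS
end ActiveLearning
end

section
/- Let v be a probability distribution on S ⊆ H with v(s) > 0 on S, and let Δ > 0, c > 0. If Δ_i(S, v)/c_i < Δ/c for every question q_i, then for every nonempty R ⊆ S and every query tree T whose leaves include R, C(T, v_R) ≥ (c/Δ) · v(R) · (1 − CP(v_R)). -/
open Finset

namespace ActiveLearning

variable {H A : Type*} {m : ℕ}

/-!
Let `P(R) = v(R)² − Σ_{h ∈ R} v(h)² = v(R)² (1 − CP(v_R))` be the mass of ordered pairs of distinct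
elements of `R`. A tree valid on `R` separates every such pair at exactly one node. A question
`q_i` asked at a node with surviving set `R'` separates pairs of mass
`v(R')² − Σ_a v(R'^a)² = v(R') · Δ_i(R', v)`, while its cost `c_i` is paid by mass `v(R')`.
Shrinkage is monotone in the version space, so `Δ_i(R', v) ≤ Δ_i(S, v) < (Δ/c) c_i`, and summing
over the nodes gives `P(R) ≤ (Δ/c) · v(R) · C(T, v_R)`.
-/

theorem mul_div_add_le_mul_div_add {a b a' b' : ℝ} (ha : 0 ≤ a) (hb : 0 ≤ b)
    (haa' : a ≤ a') (hbb' : b ≤ b') : a * b / (a + b) ≤ a' * b' / (a' + b') := by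
  rcases (add_nonneg ha hb).eq_or_lt with hab | hab
  · rw [← hab, div_zero]
    exact div_nonneg (mul_nonneg (ha.trans haa') (hb.trans hbb')) (by linarith)
  rw [div_le_div_iff₀ hab (by linarith)]
  nlinarith [mul_le_mul_of_nonneg_left hbb' (mul_nonneg ha (ha.trans haa')),
    mul_le_mul_of_nonneg_left haa' (mul_nonneg hb (hb.trans hbb'))]

section Mass

variable {v : H → ℝ}

theorem mass_nonneg_s2 {R : Finset H} (hv : ∀ s ∈ R, 0 ≤ v s) : 0 ≤ mass v R :=
  sum_nonneg hv

theorem mass_mono_s2 {R S : Finset H} (hRS : R ⊆ S) (hv : ∀ s ∈ S, 0 ≤ v s) :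
    mass v R ≤ mass v S :=
  sum_le_sum_of_subset_of_nonneg hRS fun s hs _ => hv s hs

variable [Fintype A] [DecidableEq A]

theorem sum_mass_fiberwise (qi : H → A) (S : Finset H) :
    ∑ a, mass v (S.filter fun s => qi s = a) = mass v S :=
  sum_fiberwise S qi v

/-- Each answer class contributes `x y / (x + y)` for its own mass `x` and the mass `y` of its
complement, which is monotone in both; this is what makes shrinkage monotone in `S`. -/
theorem shrink_eq_sum_mul_div_add (qi : H → A) (S : Finset H) :
    shrink qi S v = ∑ a, mass v (S.filter fun s => qi s = a) *
      mass v (S.filter fun s => ¬qi s = a) /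
        (mass v (S.filter fun s => qi s = a) + mass v (S.filter fun s => ¬qi s = a)) := by
  have hsplit (a : A) : mass v (S.filter fun s => qi s = a) + mass v (S.filter fun s => ¬qi s = a)
      = mass v S := sum_filter_add_sum_filter_not S _ v
  have hcompl (a : A) : mass v (S.filter fun s => ¬qi s = a)
      = mass v S - mass v (S.filter fun s => qi s = a) := by linarith [hsplit a]
  have hterm (a : A) : mass v (S.filter fun s => qi s = a) * mass v (S.filter fun s => ¬qi s = a) /
      (mass v (S.filter fun s => qi s = a) + mass v (S.filter fun s => ¬qi s = a)) =
      (mass v (S.filter fun s => qi s = a) * mass v S - mass v (S.filter fun s => qi s = a) ^ 2) /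
        mass v S := by
    rw [hsplit, hcompl]
    ring
  rw [sum_congr rfl fun a _ => hterm a, ← sum_div, sum_sub_distrib, ← sum_mul, sum_mass_fiberwise,
    sub_div, mul_self_div_self, shrink, sum_div]

theorem shrink_mono_s2 (qi : H → A) {R S : Finset H} (hRS : R ⊆ S) (hv : ∀ s ∈ S, 0 ≤ v s) :
    shrink qi R v ≤ shrink qi S v := by
  rw [shrink_eq_sum_mul_div_add, shrink_eq_sum_mul_div_add]
  have hnonneg (p : H → Prop) [DecidablePred p] : 0 ≤ mass v (R.filter p) :=
    mass_nonneg_s2 fun s hs => hv s (hRS (mem_filter.1 hs).1)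
  have hle (p : H → Prop) [DecidablePred p] : mass v (R.filter p) ≤ mass v (S.filter p) :=
    mass_mono_s2 (filter_subset_filter _ hRS) fun s hs => hv s (mem_filter.1 hs).1
  exact sum_le_sum fun a _ =>
    mul_div_add_le_mul_div_add (hnonneg _) (hnonneg _) (hle _) (hle _)

theorem mass_mul_shrink (qi : H → A) {R : Finset H} (hv : ∀ s ∈ R, 0 ≤ v s) :
    mass v R * shrink qi R v = mass v R ^ 2 - ∑ a, mass v (R.filter fun s => qi s = a) ^ 2 := by
  rcases (mass_nonneg_s2 hv).eq_or_lt with hM | hM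
  · have hclass (a : A) : mass v (R.filter fun s => qi s = a) = 0 :=
      le_antisymm (hM ▸ mass_mono_s2 (filter_subset _ R) hv)
        (mass_nonneg_s2 fun s hs => hv s (mem_filter.1 hs).1)
    simp [← hM, hclass]
  · rw [shrink, ← sum_div]
    field_simp

end Mass

section PairMass

variable {v : H → ℝ}

def pairMass (v : H → ℝ) (R : Finset H) : ℝ := mass v R ^ 2 - ∑ h ∈ R, v h ^ 2

theorem pairMass_of_subset_singleton {R : Finset H} {h : H} (hR : R ⊆ {h}) : pairMass v R = 0 := by
  rcases subset_singleton_iff.1 hR with rfl | rfl <;> simp [pairMass, mass]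

theorem pairMass_eq_add_sum_fiberwise [Fintype A] [DecidableEq A] (qi : H → A) (R : Finset H) :
    pairMass v R = (mass v R ^ 2 - ∑ a, mass v (R.filter fun s => qi s = a) ^ 2) +
      ∑ a, pairMass v (R.filter fun s => qi s = a) := by
  simp only [pairMass, sum_sub_distrib, sum_fiberwise R qi fun h => v h ^ 2]
  ring

variable [Fintype H] [DecidableEq H]

theorem sum_restrict_mul (R : Finset H) (f : H → ℝ) :
    ∑ h, restrict v R h * f h = (∑ h ∈ R, v h * f h) / mass v R := by
  simp [restrict, ite_mul, sum_ite_mem, sum_div, div_mul_eq_mul_div]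

theorem treeCost_restrict (q : Fin m → H → A) (c : Fin m → ℝ) (T : QTree m H A) (R : Finset H) :
    treeCost q c T (restrict v R) = (∑ h ∈ R, v h * pathCost q c T h) / mass v R :=
  sum_restrict_mul R _

theorem mass_mul_one_sub_CP_restrict (R : Finset H) :
    mass v R * (1 - CP (restrict v R)) = pairMass v R / mass v R := by
  have hCP : CP (restrict v R) = (∑ h ∈ R, v h ^ 2) / mass v R / mass v R := by
    simp only [CP, sq, sum_restrict_mul, sum_div]
    exact sum_congr rfl fun h hh => by simp only [restrict, if_pos hh]; ring
  rcases eq_or_ne (mass v R) 0 with hM | hM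
  · simp [hM]
  · rw [hCP, pairMass]
    field_simp

end PairMass

section Tree

variable {q : Fin m → H → A} {R : Finset H}

theorem ValidOn.subset_singleton {h : H} (hT : ValidOn q (.leaf h) R) : R ⊆ {h} :=
  fun s hs => mem_singleton.2 (hT s hs).symm

theorem ValidOn.filter_child [DecidableEq A] {i : Fin m} {ch : A → QTree m H A}
    (hT : ValidOn q (.node i ch) R) (a : A) : ValidOn q (ch a) (R.filter fun s => q i s = a) := by
  intro s hs
  obtain ⟨hsR, rfl⟩ := mem_filter.1 hs
  exact hT s hsR

theorem sum_mul_pathCost_node [Fintype A] [DecidableEq A] (c : Fin m → ℝ) (v : H → ℝ) (i : Fin m)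
    (ch : A → QTree m H A) (R : Finset H) :
    ∑ h ∈ R, v h * pathCost q c (.node i ch) h =
      c i * mass v R + ∑ a, ∑ h ∈ R.filter (fun s => q i s = a), v h * pathCost q c (ch a) h := by
  simp only [pathCost, mul_add, sum_add_distrib, mass, sum_mul, mul_comm (c i)]
  rw [← sum_fiberwise R (q i) fun h => v h * pathCost q c (ch (q i h)) h]
  refine congrArg _ (sum_congr rfl fun a _ => sum_congr rfl fun h hh => ?_)
  rw [(mem_filter.1 hh).2]

theorem pairMass_le_mul_sum_pathCost [Fintype A] [DecidableEq A] {c : Fin m → ℝ} {v : H → ℝ}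
    {S : Finset H} {K : ℝ} (hv : ∀ s ∈ S, 0 ≤ v s) (hK : ∀ i, shrink (q i) S v ≤ K * c i)
    (T : QTree m H A) (hRS : R ⊆ S) (hT : ValidOn q T R) :
    pairMass v R ≤ K * ∑ h ∈ R, v h * pathCost q c T h := by
  induction T generalizing R with
  | leaf h =>
    rw [pairMass_of_subset_singleton hT.subset_singleton]
    simp [pathCost]
  | node i ch ih =>
    have hvR : ∀ s ∈ R, 0 ≤ v s := fun s hs => hv s (hRS hs)
    have hseparated : mass v R * shrink (q i) R v ≤ mass v R * (K * c i) :=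
      mul_le_mul_of_nonneg_left ((shrink_mono_s2 _ hRS hv).trans (hK i)) (mass_nonneg_s2 hvR)
    have hchildren (a : A) := ih a ((filter_subset _ R).trans hRS) (hT.filter_child a)
    rw [pairMass_eq_add_sum_fiberwise (q i), ← mass_mul_shrink _ hvR, sum_mul_pathCost_node,
      mul_add, mul_sum]
    linarith [sum_le_sum fun a (_ : a ∈ univ) => hchildren a]

end Tree

theorem tree_cost_lower_bound_general [Fintype H] [Fintype A] [DecidableEq H] [DecidableEq A]
    (q : Fin m → H → A) (c : Fin m → ℝ) (hc : ∀ i, 0 < c i)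
    (S : Finset H) (v : H → ℝ)
    (hvpos : ∀ s ∈ S, 0 < v s)
    (Δ c0 : ℝ) (hΔ : 0 < Δ) (hc0 : 0 < c0)
    (hshrink : ∀ i : Fin m, shrink (q i) S v / c i < Δ / c0)
    (R : Finset H) (hRS : R ⊆ S)
    (T : QTree m H A) (hT : ValidOn q T R) :
    (c0 / Δ) * mass v R * (1 - CP (restrict v R)) ≤ treeCost q c T (restrict v R) := by
  have hv : ∀ s ∈ S, 0 ≤ v s := fun s hs => (hvpos s hs).le
  have hK : ∀ i, shrink (q i) S v ≤ Δ / c0 * c i :=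
    fun i => ((div_lt_iff₀ (hc i)).1 (hshrink i)).le
  have hpairs := pairMass_le_mul_sum_pathCost hv hK T hRS hT
  rw [mul_assoc, mass_mul_one_sub_CP_restrict, treeCost_restrict, ← mul_div_assoc]
  refine div_le_div_of_nonneg_right ?_ (mass_nonneg_s2 fun s hs => hv s (hRS hs))
  calc c0 / Δ * pairMass v R
      ≤ c0 / Δ * (Δ / c0 * ∑ h ∈ R, v h * pathCost q c T h) := by gcongr
    _ = ∑ h ∈ R, v h * pathCost q c T h := by field_simp

/-- If `Δ_i(S, v)/c_i < Δ/c` for every question `q_i`, then for every nonempty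
`R ⊆ S` and every query tree `T` whose leaves include `R`,
`C(T, v_R) ≥ (c/Δ) · v(R) · (1 − CP(v_R))`. -/
theorem tree_cost_lower_bound [Fintype H] [Fintype A] [DecidableEq H] [DecidableEq A]
    (q : Fin m → H → A) (c : Fin m → ℝ) (hc : ∀ i, 0 < c i)
    (S : Finset H) (v : H → ℝ)
    (hvpos : ∀ s ∈ S, 0 < v s) (hv0 : ∀ s ∉ S, v s = 0) (hv1 : mass v S = 1)
    (Δ c0 : ℝ) (hΔ : 0 < Δ) (hc0 : 0 < c0)
    (hshrink : ∀ i : Fin m, shrink (q i) S v / c i < Δ / c0)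
    (R : Finset H) (hR : R.Nonempty) (hRS : R ⊆ S)
    (T : QTree m H A) (hT : ValidOn q T R) :
    (c0 / Δ) * mass v R * (1 - CP (restrict v R)) ≤ treeCost q c T (restrict v R) :=
  tree_cost_lower_bound_general q c hc S v hvpos Δ c0 hΔ hc0 hshrink R hRS T hT

end ActiveLearning
end

section
/- Let S ⊆ H with |S| > 1 and h_0 ∈ S with π_S(h_0) > 1/2, let R = S \ {h_0}, and let T* be any query tree whose leaves contain S. Then some question q_i satisfies δ_i / c_i ≥ 1 / C*(h_0). -/
/-!
Every `r ∈ R` reaches a different leaf of `T*` than `h₀`, so some question on the root-to-`h₀`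
path separates it from `h₀`. Hence the `δ_i` of the questions on that path sum to at least
`π_R(R) = 1`, while their costs sum to at most `C*(h₀)`, and the best ratio `δ_i / c_i` on the
path is at least the ratio of the two sums.
-/

open Finset

namespace ActiveLearning

variable {H A : Type*} {m : ℕ}

theorem _root_.List.sum_toFinset_le_sum_map {α M : Type*} [DecidableEq α] [AddCommMonoid M]
    [PartialOrder M] [IsOrderedAddMonoid M] {f : α → M} {l : List α} (hf : ∀ a ∈ l, 0 ≤ f a) :
    ∑ a ∈ l.toFinset, f a ≤ (l.map f).sum := by
  rw [Finset.sum_eq_multiset_sum, List.toFinset_val, Multiset.map_coe, Multiset.sum_coe]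
  exact ((List.dedup_sublist l).map f).sum_le_sum (by simpa using hf)

theorem _root_.Finset.sum_le_sum_sum_filter_of_cover {ι α M : Type*} [AddCommMonoid M]
    [PartialOrder M] [IsOrderedAddMonoid M] {s : Finset α} {t : Finset ι} {p : ι → α → Prop}
    [∀ i, DecidablePred (p i)] {f : α → M} (hf : ∀ x ∈ s, 0 ≤ f x)
    (hcover : ∀ x ∈ s, ∃ i ∈ t, p i x) :
    ∑ x ∈ s, f x ≤ ∑ i ∈ t, ∑ x ∈ s with p i x, f x := by
  calc ∑ x ∈ s, f x ≤ ∑ x ∈ s, ∑ i ∈ t, if p i x then f x else 0 := by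
        refine sum_le_sum fun x hx => ?_
        obtain ⟨i, hi, hpx⟩ := hcover x hx
        calc f x = if p i x then f x else 0 := (if_pos hpx).symm
          _ ≤ _ := single_le_sum (f := fun i => if p i x then f x else 0)
                (fun j _ => by split_ifs <;> simp [hf x hx]) hi
    _ = ∑ i ∈ t, ∑ x ∈ s with p i x, f x := by
        rw [sum_comm]; simp only [sum_filter]

theorem _root_.Finset.exists_sum_div_sum_le_div {ι K : Type*} [Field K] [LinearOrder K]
    [IsStrictOrderedRing K] {s : Finset ι} (hs : s.Nonempty) {a b : ι → K}
    (hb : ∀ i ∈ s, 0 < b i) : ∃ i ∈ s, (∑ j ∈ s, a j) / (∑ j ∈ s, b j) ≤ a i / b i := by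
  have hsum : 0 < ∑ j ∈ s, b j := sum_pos hb hs
  obtain ⟨i, hi, hle⟩ := exists_le_of_sum_le hs
    (f := fun j => (∑ j ∈ s, a j) / (∑ j ∈ s, b j) * b j) (g := a)
    (by rw [← mul_sum, div_mul_cancel₀ _ hsum.ne'])
  exact ⟨i, hi, (le_div_iff₀ (hb i hi)).2 hle⟩

section Trees

variable (q : Fin m → H → A)

theorem pathCost_eq_sum_map_pathQs (c : Fin m → ℝ) (T : QTree m H A) (h : H) :
    pathCost q c T h = ((pathQs q T h).map c).sum := by
  induction T with
  | leaf => rfl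
  | node i ch ih => simp [pathCost, pathQs, ih]

theorem exists_mem_pathQs_ne_of_follow_ne {T : QTree m H A} {h r : H}
    (hne : follow q T r ≠ follow q T h) : ∃ i ∈ pathQs q T h, q i r ≠ q i h := by
  induction T with
  | leaf => exact absurd rfl hne
  | node i ch ih =>
    by_cases hq : q i r = q i h
    · simp only [follow, hq] at hne
      obtain ⟨j, hj, hjne⟩ := ih _ hne
      exact ⟨j, List.mem_cons_of_mem _ hj, hjne⟩
    · exact ⟨i, List.mem_cons_self, hq⟩

end Trees

theorem restrict_nonneg [DecidableEq H] {v : H → ℝ} (hv : ∀ h, 0 ≤ v h) (S : Finset H) (h : H) :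
    0 ≤ restrict v S h := by
  unfold restrict
  split_ifs
  exacts [div_nonneg (hv h) (sum_nonneg fun s _ => hv s), le_rfl]

theorem mass_restrict_self [DecidableEq H] {v : H → ℝ} {S : Finset H} (hS : mass v S ≠ 0) :
    mass (restrict v S) S = 1 := by
  simp only [mass, restrict]
  rw [sum_congr rfl fun x hx => if_pos hx, ← sum_div]
  exact div_self hS

theorem exists_separating_question_general [DecidableEq H] [DecidableEq A]
    (π : H → ℝ) (hπpos : ∀ h, 0 < π h)
    (q : Fin m → H → A) (c : Fin m → ℝ) (hc : ∀ i, 0 < c i)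
    (S : Finset H) (hS : 1 < S.card)
    (h0 : H) (h0S : h0 ∈ S)
    (Tstar : QTree m H A) (hTstar : ValidOn q Tstar S) :
    ∃ i : Fin m,
      1 / pathCost q c Tstar h0 ≤
        mass (restrict π (S.erase h0))
          ((S.erase h0).filter fun r => q i r ≠ q i h0) / c i := by
  set R := S.erase h0
  set F := (pathQs q Tstar h0).toFinset
  set δ := fun i => mass (restrict π R) (R.filter fun r => q i r ≠ q i h0)
  obtain ⟨r0, hr0⟩ : R.Nonempty := by
    rw [← card_pos, card_erase_of_mem h0S]
    omega
  have hsep : ∀ r ∈ R, ∃ i ∈ F, q i r ≠ q i h0 := fun r hr => by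
    obtain ⟨hrh0, hrS⟩ := mem_erase.1 hr
    simpa [F] using exists_mem_pathQs_ne_of_follow_ne q
      (by rwa [hTstar r hrS, hTstar h0 h0S] : follow q Tstar r ≠ follow q Tstar h0)
  have hcover : 1 ≤ ∑ i ∈ F, δ i := by
    rw [← mass_restrict_self (sum_pos (fun h _ => hπpos h) ⟨r0, hr0⟩).ne']
    exact sum_le_sum_sum_filter_of_cover
      (fun h _ => restrict_nonneg (fun h => (hπpos h).le) R h) hsep
  have hF : F.Nonempty := let ⟨i, hi, _⟩ := hsep r0 hr0; ⟨i, hi⟩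
  have hcost : ∑ i ∈ F, c i ≤ pathCost q c Tstar h0 := by
    rw [pathCost_eq_sum_map_pathQs]
    exact List.sum_toFinset_le_sum_map fun i _ => (hc i).le
  obtain ⟨i, -, hi⟩ := exists_sum_div_sum_le_div hF (a := δ) fun i _ => hc i
  refine ⟨i, ?_⟩
  have hFcost : 0 < ∑ i ∈ F, c i := sum_pos (fun i _ => hc i) hF
  calc 1 / pathCost q c Tstar h0 ≤ 1 / ∑ i ∈ F, c i := one_div_le_one_div_of_le hFcost hcost
    _ ≤ (∑ i ∈ F, δ i) / ∑ i ∈ F, c i := div_le_div_of_nonneg_right hcover hFcost.le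
    _ ≤ δ i / c i := hi

/-- If `h_0 ∈ S` has `π_S(h_0) > 1/2` and `T*` is any query tree whose leaves
contain `S`, then some question `q_i` satisfies `δ_i / c_i ≥ 1 / C*(h_0)`, where
`R = S \ {h_0}` and `δ_i = π_R({r ∈ R : q_i(r) ≠ q_i(h_0)})`. -/
theorem exists_separating_question [Fintype H] [Fintype A] [DecidableEq H] [DecidableEq A]
    (π : H → ℝ) (hπpos : ∀ h, 0 < π h) (hπsum : ∑ h : H, π h = 1)
    (hH : 1 < Fintype.card H)
    (q : Fin m → H → A) (c : Fin m → ℝ) (hc : ∀ i, 0 < c i)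
    (S : Finset H) (hS : 1 < S.card)
    (h0 : H) (h0S : h0 ∈ S) (hh0 : 1 / 2 < restrict π S h0)
    (Tstar : QTree m H A) (hTstar : ValidOn q Tstar S) :
    ∃ i : Fin m,
      1 / pathCost q c Tstar h0 ≤
        mass (restrict π (S.erase h0))
          ((S.erase h0).filter fun r => q i r ≠ q i h0) / c i :=
  exists_separating_question_general π hπpos q c hc S hS h0 h0S Tstar hTstar
end ActiveLearning
end
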